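/- Let S be a stationary subset of the limit ordinals below ω₁, and for each α < ω₁ let σ(α) be the least element of S greater than α. Then there is a family ⟨ζ_α : α < ω₁⟩ such that each ζ_α : ω → σ(α) is strictly increasing with range cofinal in σ(α), ζ_α(0) > α, and for all α ≠ β the ranges of ζ_α and ζ_β are disjoint. -/

import Mathlib

open Ordinal Set

noncomputable def omega1 : Ordinal := (Cardinal.aleph 1).ord

def IsLadderOn (δ : Ordinal) (η : ℕ → Ordinal) : Prop :=
  StrictMono η ∧ (∀ n, η n < δ) ∧ ∀ β < δ, ∃ n, β ≤ η n

def IsLadderAt (α : Ordinal) (η : ℕ → Ordinal) : Prop :=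
  ∃ (δ : Ordinal) (n : ℕ), Order.IsSuccLimit δ ∧ α = δ + n ∧ IsLadderOn δ η

def IsClub' (C : Set Ordinal) : Prop :=
  C ⊆ Set.Iio omega1 ∧
  (∀ α < omega1, ∃ β ∈ C, α < β) ∧
  (∀ δ < omega1, Order.IsSuccLimit δ → (∀ α < δ, ∃ β ∈ C, α < β ∧ β < δ) → δ ∈ C)

def IsStat (S : Set Ordinal) : Prop := ∀ C, IsClub' C → (S ∩ C).Nonempty

def UnifBelow (S : Set Ordinal) (η : Ordinal → ℕ → Ordinal) (h : Ordinal → ℕ → ℕ) : Prop :=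
  ∀ c : Ordinal → ℕ → ℕ, (∀ α ∈ S, ∀ n, c α n < h α n) →
    ∃ (f : Ordinal → ℕ) (fs : Ordinal → ℕ), ∀ α ∈ S, ∀ n, fs α ≤ n → f (η α n) = c α n

def LambdaUnif (S : Set Ordinal) (η : Ordinal → ℕ → Ordinal) (l : ℕ) : Prop :=
  UnifBelow S η (fun _ _ => l)

def OmegaUnif (S : Set Ordinal) (η : Ordinal → ℕ → Ordinal) : Prop :=
  ∀ c : Ordinal → ℕ → ℕ,
    ∃ (f : Ordinal → ℕ) (fs : Ordinal → ℕ), ∀ α ∈ S, ∀ n, fs α ≤ n → f (η α n) = c α n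

def TreeLike (S : Set Ordinal) (η : Ordinal → ℕ → Ordinal) : Prop :=
  ∀ α ∈ S, ∀ β ∈ S, ∀ n m, η α n = η β m → n = m ∧ ∀ k ≤ n, η α k = η β k

def StronglyTreeLike (S : Set Ordinal) (η : Ordinal → ℕ → Ordinal) (F : Ordinal → ℕ) : Prop :=
  TreeLike S η ∧ ∀ α ∈ S, ∀ β ∈ S, ∀ n m, η α n = η β m → F α = F β

/-!
For a fixed `δ ∈ S`, the `α` with `σ(α) = δ` all lie below `δ`, so there are countably many of
them. Fix one ladder `E` on `δ` and an injection `g` of `Iio δ` into `ℕ`; the ladder of `α` is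
`n ↦ E (pair (g α) (n + m))`, with `m` large enough that `E m > α`. Distinct codes `g α` make
these ladders disjoint. Ladders on different elements of `S` are disjoint because the range of
`ζ_α` lies in `(α, σ(α))`, and `σ(α) < σ(β)` forces `σ(α) ≤ β`.
-/

theorem countable_Iio_of_lt_omega1 {δ : Ordinal} (h : δ < omega1) : (Iio δ).Countable := by
  rw [← Cardinal.le_aleph0_iff_set_countable, Cardinal.mk_Iio_ordinal, Cardinal.lift_le_aleph0,
    ← Cardinal.lt_aleph_one_iff]
  exact Cardinal.lt_ord.mp h

theorem Order.IsSuccLimit.exists_strictMono_ge {α : Type*} [LinearOrder α] [SuccOrder α]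
    {δ : α} (hδ : Order.IsSuccLimit δ) (f : ℕ → α) (hf : ∀ n, f n < δ) :
    ∃ E : ℕ → α, StrictMono E ∧ (∀ n, E n < δ) ∧ ∀ n, f n ≤ E n := by
  let E : ℕ → α := fun n => Nat.rec (f 0) (fun k Ek => max (f (k + 1)) (Order.succ Ek)) n
  have hE_succ : ∀ n, E (n + 1) = max (f (n + 1)) (Order.succ (E n)) := fun _ => rfl
  have hE_lt : ∀ n, E n < δ := by
    intro n
    induction n with
    | zero => exact hf 0
    | succ n ih => exact (hE_succ n).trans_lt (max_lt (hf _) (hδ.succ_lt ih))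
  refine ⟨E, strictMono_nat_of_lt_succ fun n => ?_, hE_lt, fun n => ?_⟩
  · calc E n < Order.succ (E n) := Order.lt_succ_of_not_isMax (hE_lt n).not_isMax
      _ ≤ E (n + 1) := (hE_succ n).symm ▸ le_max_right _ _
  · cases n with
    | zero => exact le_rfl
    | succ n => exact (hE_succ n).symm ▸ le_max_left _ _

theorem exists_isLadderOn {δ : Ordinal} (hδ : Order.IsSuccLimit δ) (hc : (Iio δ).Countable) :
    ∃ E : ℕ → Ordinal, IsLadderOn δ E := by
  obtain ⟨f, hf⟩ := hc.exists_eq_range ⟨0, hδ.pos⟩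
  obtain ⟨E, hE_mono, hE_lt, hfE⟩ :=
    hδ.exists_strictMono_ge f fun n => (hf ▸ mem_range_self n : f n ∈ Iio δ)
  refine ⟨E, hE_mono, hE_lt, fun β hβ => ?_⟩
  obtain ⟨n, rfl⟩ : β ∈ range f := hf ▸ hβ
  exact ⟨n, hfE n⟩

namespace IsLadderOn

variable {δ : Ordinal} {η : ℕ → Ordinal}

theorem comp (h : IsLadderOn δ η) {φ : ℕ → ℕ} (hφ : StrictMono φ) : IsLadderOn δ (η ∘ φ) := by
  obtain ⟨h_mono, h_lt, h_cof⟩ := h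
  refine ⟨h_mono.comp hφ, fun n => h_lt _, fun β hβ => ?_⟩
  obtain ⟨n, hn⟩ := h_cof β hβ
  exact ⟨n, hn.trans (h_mono.monotone (hφ.id_le n))⟩

theorem exists_lt (h : IsLadderOn δ η) {β : Ordinal} (hβ : β < δ) : ∃ n, β < η n := by
  obtain ⟨n, hn⟩ := h.2.2 β hβ
  exact ⟨n + 1, hn.trans_lt (h.1 n.lt_succ_self)⟩

theorem range_subset_Ioo (h : IsLadderOn δ η) {α : Ordinal} (hα : α < η 0) :
    range η ⊆ Ioo α δ := by
  rintro _ ⟨n, rfl⟩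
  exact ⟨hα.trans_le (h.1.monotone n.zero_le), h.2.1 n⟩

theorem exists_disjoint_family (h : IsLadderOn δ η) (hc : (Iio δ).Countable) :
    ∃ ζ : Ordinal → ℕ → Ordinal,
      (∀ α < δ, IsLadderOn δ (ζ α) ∧ α < ζ α 0) ∧
      ∀ α < δ, ∀ β < δ, α ≠ β → Disjoint (range (ζ α)) (range (ζ β)) := by
  obtain ⟨g, hg⟩ := countable_iff_exists_injOn.mp hc
  choose! m hm using fun α (hα : α < δ) => h.exists_lt hα
  refine ⟨fun α n => η (Nat.pair (g α) (n + m α)), fun α hα => ⟨?_, ?_⟩, ?_⟩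
  · exact h.comp (φ := fun n => Nat.pair (g α) (n + m α))
      fun a b hab => Nat.pair_lt_pair_right _ (by omega)
  · exact (hm α hα).trans_le (h.1.monotone (by simpa using Nat.right_le_pair (g α) (0 + m α)))
  · intro α hα β hβ hαβ
    refine disjoint_range_iff.mpr fun n k hnk => hαβ (hg hα hβ ?_)
    exact (Nat.pair_eq_pair.mp (h.1.injective hnk)).1

end IsLadderOn

theorem disjoint_Ioo_of_isLeast {ι : Type*} [LinearOrder ι] {S : Set ι} {a b x y : ι}
    (hx : IsLeast {c ∈ S | a < c} x) (hy : IsLeast {c ∈ S | b < c} y) (hxy : x ≠ y) :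
    Disjoint (Ioo a x) (Ioo b y) := by
  wlog hlt : x < y generalizing a b x y
  · exact (this hy hx hxy.symm (hxy.lt_or_gt.resolve_left hlt)).symm
  have hxb : x ≤ b := not_lt.mp fun hbx => (hy.2 ⟨hx.1.1, hbx⟩).not_gt hlt
  exact disjoint_left.mpr fun z hz hz' => (hz.2.trans_le hxb).not_gt hz'.1

theorem stmt3_general (S : Set Ordinal)
    (hS : ∀ δ ∈ S, δ < omega1 ∧ Order.IsSuccLimit δ)
    (σ : Ordinal → Ordinal)
    (hσ : ∀ α < omega1, σ α ∈ S ∧ α < σ α ∧ ∀ β ∈ S, α < β → σ α ≤ β) :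
    ∃ ζ : Ordinal → ℕ → Ordinal,
      (∀ α < omega1, IsLadderOn (σ α) (ζ α) ∧ α < ζ α 0) ∧
      ∀ α < omega1, ∀ β < omega1, α ≠ β →
        Disjoint (Set.range (ζ α)) (Set.range (ζ β)) := by
  have hfamily : ∀ δ ∈ S, ∃ Z : Ordinal → ℕ → Ordinal,
      (∀ α < δ, IsLadderOn δ (Z α) ∧ α < Z α 0) ∧
      ∀ α < δ, ∀ β < δ, α ≠ β → Disjoint (range (Z α)) (range (Z β)) := fun δ hδ => by
    have hc := countable_Iio_of_lt_omega1 (hS δ hδ).1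
    obtain ⟨E, hE⟩ := exists_isLadderOn (hS δ hδ).2 hc
    exact hE.exists_disjoint_family hc
  choose! Z hZ_ladder hZ_disj using hfamily
  have hleast : ∀ α < omega1, IsLeast {c ∈ S | α < c} (σ α) := fun α hα =>
    ⟨⟨(hσ α hα).1, (hσ α hα).2.1⟩, fun β hβ => (hσ α hα).2.2 β hβ.1 hβ.2⟩
  have hladder : ∀ α < omega1, IsLadderOn (σ α) (Z (σ α) α) ∧ α < Z (σ α) α 0 :=
    fun α hα => hZ_ladder _ (hσ α hα).1 α (hσ α hα).2.1
  refine ⟨fun α => Z (σ α) α, hladder, fun α hα β hβ hαβ => ?_⟩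
  by_cases hσαβ : σ α = σ β
  · simp only [← hσαβ]
    exact hZ_disj _ (hσ α hα).1 α (hσ α hα).2.1 β (hσαβ ▸ (hσ β hβ).2.1) hαβ
  · exact (disjoint_Ioo_of_isLeast (hleast α hα) (hleast β hβ) hσαβ).mono
      ((hladder α hα).1.range_subset_Ioo (hladder α hα).2)
      ((hladder β hβ).1.range_subset_Ioo (hladder β hβ).2)

/-- Given a stationary `S ⊆ lim(ω₁)` with `σ(α)` the least element of `S` above `α`,
there are pairwise disjoint ladders `ζ_α` on `σ(α)` with `ζ_α(0) > α`. -/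
theorem stmt3 (S : Set Ordinal)
    (hS : ∀ δ ∈ S, δ < omega1 ∧ Order.IsSuccLimit δ) (hstat : IsStat S)
    (σ : Ordinal → Ordinal)
    (hσ : ∀ α < omega1, σ α ∈ S ∧ α < σ α ∧ ∀ β ∈ S, α < β → σ α ≤ β) :
    ∃ ζ : Ordinal → ℕ → Ordinal,
      (∀ α < omega1, IsLadderOn (σ α) (ζ α) ∧ α < ζ α 0) ∧
      ∀ α < omega1, ∀ β < omega1, α ≠ β →
        Disjoint (Set.range (ζ α)) (Set.range (ζ β)) :=
  stmt3_general S hS σ hσ
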